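/- (Theorem 1, static error resilience of Construction I) Let k, α, t, M be positive integers with 2tα ≤ kα − M, set N = kα, and let K be a finite field with q^m elements, m ≥ N. Let g_1, …, g_N ∈ K be linearly independent over F_q. For j = 1, 2 let f_j(x) = Σ_{i=0}^{M−1} a_i^{(j)} x^{q^i} be a linearized polynomial of q-degree at most M − 1, let G be an invertible N × N matrix with entries in F_q, let e_j ∈ K^{tα}, and let B_j be tα × N matrices with entries in F_q. If (f_1(g_1), …, f_1(g_N))·G + e_1 B_1 = (f_2(g_1), …, f_2(g_N))·G + e_2 B_2, then a_i^{(1)} = a_i^{(2)} for all 0 ≤ i ≤ M − 1. That is, when the outer [N = kα, M, D = N − M + 1] Gabidulin code satisfies 2tα + 1 ≤ D, the original file can be recovered from the contents of any k nodes of the concatenated scheme despite t statically corrupted nodes, each of which (together with error propagation through node repairs with coefficients over F_q) contributes an error of rank at most α. -/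

import Mathlib

/-- The subfield `F_q = {a ∈ K : a ^ q = a}` of a field `K` of characteristic `p`,
where `q = p ^ e`. -/
def Fqsub (p e : ℕ) (K : Type*) [Field K] [Fact p.Prime] [CharP K p] : Subfield K where
  carrier := {x : K | x ^ p ^ e = x}
  mul_mem' := by
    intro a b ha hb
    simp only [Set.mem_setOf_eq] at *
    rw [mul_pow, ha, hb]
  one_mem' := by simp
  add_mem' := by
    intro a b ha hb
    haveI : ExpChar K p := ExpChar.prime Fact.out
    simp only [Set.mem_setOf_eq] at *
    rw [add_pow_expChar_pow, ha, hb]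
  zero_mem' := by
    simp only [Set.mem_setOf_eq]
    exact zero_pow (pow_ne_zero _ (Nat.Prime.ne_zero Fact.out))
  neg_mem' := by
    intro a ha
    haveI : ExpChar K p := ExpChar.prime Fact.out
    simp only [Set.mem_setOf_eq] at *
    calc (-a) ^ p ^ e = (0 - a) ^ p ^ e := by rw [zero_sub]
    _ = 0 ^ p ^ e - a ^ p ^ e := sub_pow_expChar_pow 0 a e
    _ = -a := by
        rw [ha, zero_pow (pow_ne_zero _ (Nat.Prime.ne_zero (Fact.out : p.Prime))), zero_sub]
  inv_mem' := by
    intro x hx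
    simp only [Set.mem_setOf_eq] at *
    rw [inv_pow, hx]

/-- The rank over `F_q` of a vector `v ∈ K^N`: the dimension over `F_q` of the
`F_q`-linear span of its coordinates. -/
noncomputable def rankFq (p e : ℕ) (K : Type*) [Field K] [Fact p.Prime] [CharP K p]
    {N : ℕ} (v : Fin N → K) : ℕ :=
  Module.finrank (Fqsub p e K) (Submodule.span (Fqsub p e K) (Set.range v))

/-!
Put `c = a₁ - a₂` and `φ x = ∑ l, c l * x ^ q ^ l`, an `F_q`-linear map. Multiplying the equation
by `G⁻¹` shows that `φ` maps the `N`-dimensional `F_q`-span of the `g i` into the `F_q`-span of the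
`2tα` error symbols, so its kernel there has dimension at least `N - 2tα ≥ M`, hence at least
`q ^ M` elements (`F_q` has at least `q` elements, since the Galois field of order `q` embeds
into `K`). All of them are roots of the polynomial `∑ l, c l * X ^ q ^ l` of degree at most
`q ^ (M - 1)`, so `c = 0`.
-/

open Polynomial Module Submodule Matrix

lemma pow_pow_eq_self {M : Type*} [Monoid M] {s : M} {n : ℕ} (hs : s ^ n = s) (l : ℕ) :
    s ^ n ^ l = s := by
  induction l with
  | zero => simp
  | succ l ih => rw [pow_succ, pow_mul, ih, hs]

lemma le_natCard_Fqsub (p e m : ℕ) [Fact p.Prime] (he : e ≠ 0) (K : Type*) [Field K] [Fintype K]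
    [CharP K p] (hcard : Fintype.card K = (p ^ e) ^ m) :
    p ^ e ≤ Nat.card (Fqsub p e K) := by
  let := ZMod.algebra K p
  have hK : finrank (ZMod p) K = e * m := by
    refine Nat.pow_right_injective (Fact.out : p.Prime).two_le ?_
    simp only [FiniteField.pow_finrank_eq_card, hcard, pow_mul]
  obtain ⟨f⟩ : Nonempty (GaloisField p e →ₐ[ZMod p] K) :=
    FiniteField.nonempty_algHom_of_finrank_dvd ⟨m, by rw [GaloisField.finrank p he, hK]⟩
  have hfix (x : GaloisField p e) : f x ∈ Fqsub p e K := by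
    have := Fintype.ofFinite (GaloisField p e)
    change f x ^ p ^ e = f x
    rw [← map_pow, ← GaloisField.card p e he, Nat.card_eq_fintype_card, FiniteField.pow_card]
  rw [← GaloisField.card p e he]
  exact Nat.card_le_card_of_injective (fun x => ⟨f x, hfix x⟩)
    fun x y hxy => f.injective (congrArg Subtype.val hxy)

noncomputable def linearizedPoly {R : Type*} [CommRing R] (q : ℕ) {M : ℕ} (c : Fin M → R) :
    R[X] :=
  ∑ l, C (c l) * X ^ q ^ (l : ℕ)

section linearizedPoly

variable {R : Type*} [CommRing R] {q M : ℕ}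

lemma eval_linearizedPoly (c : Fin M → R) (x : R) :
    (linearizedPoly q c).eval x = ∑ l, c l * x ^ q ^ (l : ℕ) := by
  simp [linearizedPoly, eval_finsetSum]

lemma coeff_linearizedPoly (hq : 1 < q) (c : Fin M → R) (l : Fin M) :
    (linearizedPoly q c).coeff (q ^ (l : ℕ)) = c l := by
  rw [linearizedPoly, finsetSum_coeff, Finset.sum_eq_single l]
  · simp
  · intro l' _ hl'
    rw [coeff_C_mul_X_pow, if_neg fun h => hl' (Fin.ext (Nat.pow_right_injective hq h).symm)]
  · simp

lemma linearizedPoly_ne_zero (hq : 1 < q) {c : Fin M → R} (hc : c ≠ 0) :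
    linearizedPoly q c ≠ 0 := by
  obtain ⟨l, hl⟩ := Function.ne_iff.mp hc
  exact fun h => hl (by rw [← coeff_linearizedPoly hq c l, h, coeff_zero, Pi.zero_apply])

lemma natDegree_linearizedPoly_le (hq : 0 < q) (c : Fin M → R) :
    (linearizedPoly q c).natDegree ≤ q ^ (M - 1) :=
  natDegree_sum_le_of_forall_le _ _ fun l _ =>
    (natDegree_C_mul_X_pow_le _ _).trans (Nat.pow_le_pow_right hq (by omega))

end linearizedPoly

noncomputable def linearizedMap (p e : ℕ) (K : Type*) [Field K] [Fact p.Prime] [CharP K p]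
    {M : ℕ} (c : Fin M → K) : K →ₗ[Fqsub p e K] K where
  toFun x := ∑ l, c l * x ^ (p ^ e) ^ (l : ℕ)
  map_add' x y := by
    have := ExpChar.prime (Fact.out : p.Prime) (R := K)
    simp only [← pow_mul, add_pow_expChar_pow, mul_add, Finset.sum_add_distrib]
  map_smul' s x := by
    simp only [RingHom.id_apply, Subfield.smul_def, smul_eq_mul, mul_pow,
      pow_pow_eq_self s.2, Finset.mul_sum, mul_left_comm]

lemma linearizedMap_apply (p e : ℕ) (K : Type*) [Field K] [Fact p.Prime] [CharP K p]
    {M : ℕ} (c : Fin M → K) (x : K) :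
    linearizedMap p e K c x = (linearizedPoly (p ^ e) c).eval x :=
  (eval_linearizedPoly c x).symm

lemma card_pow_finrank_le_natDegree {F K : Type*} [Field F] [Field K] [Algebra F K] [Finite K]
    (U : Submodule F K) {P : K[X]} (hP : P ≠ 0) (hU : ∀ x ∈ U, P.IsRoot x) :
    Nat.card F ^ finrank F U ≤ P.natDegree := by
  classical
  have := Finite.of_injective _ (algebraMap F K).injective
  rw [← Module.natCard_eq_pow_finrank]
  calc Nat.card U ≤ Nat.card P.roots.toFinset :=
        Nat.card_le_card_of_injective (fun x => ⟨x, by simpa [hP] using hU x x.2⟩)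
          fun x y hxy => Subtype.ext (congrArg Subtype.val hxy :)
    _ ≤ P.natDegree := by
      rw [Nat.card_eq_fintype_card, Fintype.card_coe]
      exact (Multiset.toFinset_card_le _).trans (card_roots' P)

lemma Submodule.finrank_map_add_finrank_inf_ker {F E E' : Type*} [DivisionRing F]
    [AddCommGroup E] [Module F E] [AddCommGroup E'] [Module F E'] (φ : E →ₗ[F] E')
    (V : Submodule F E) [FiniteDimensional F V] :
    finrank F (V.map φ) + finrank F ↥(V ⊓ LinearMap.ker φ) = finrank F V := by
  rw [← LinearMap.range_domRestrict, ← map_comap_subtype, ← LinearMap.ker_domRestrict,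
    finrank_map_subtype_eq, LinearMap.finrank_range_add_finrank_ker]

lemma vecMul_map_algebraMap_mem {F K ι n : Type*} [Fintype ι] [CommSemiring F] [CommSemiring K]
    [Algebra F K] {W : Submodule F K} {u : ι → K} (hu : ∀ i, u i ∈ W) (B : Matrix ι n F) (j : n) :
    (u ᵥ* B.map (algebraMap F K)) j ∈ W :=
  W.sum_mem fun i _ => by
    change u i * algebraMap F K (B i j) ∈ W
    rw [mul_comm, ← Algebra.smul_def]
    exact W.smul_mem _ (hu i)

lemma mem_of_vecMul_map_algebraMap_mem {F K n : Type*} [Fintype n] [DecidableEq n] [CommRing F]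
    [CommRing K] [Algebra F K] {W : Submodule F K} {v : n → K} {G : Matrix n n F} (hG : IsUnit G)
    (h : ∀ j, (v ᵥ* G.map (algebraMap F K)) j ∈ W) (i : n) : v i ∈ W := by
  have hv : v = (v ᵥ* G.map (algebraMap F K)) ᵥ* G⁻¹.map (algebraMap F K) := by
    rw [vecMul_vecMul, ← Matrix.map_mul, mul_nonsing_inv _ ((isUnit_iff_isUnit_det G).mp hG),
      Matrix.map_one _ (map_zero _) (map_one _), vecMul_one]
  rw [hv]
  exact vecMul_map_algebraMap_mem h _ i

lemma Submodule.finrank_le_finrank_inf_ker_add_of_map_le {F E E' : Type*} [DivisionRing F]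
    [AddCommGroup E] [Module F E] [AddCommGroup E'] [Module F E'] (φ : E →ₗ[F] E')
    (V : Submodule F E) [FiniteDimensional F V] {W : Submodule F E'} [FiniteDimensional F W]
    (hVW : V.map φ ≤ W) :
    finrank F V ≤ finrank F ↥(V ⊓ LinearMap.ker φ) + finrank F W := by
  rw [← finrank_map_add_finrank_inf_ker φ V, add_comm]
  exact Nat.add_le_add_left (finrank_mono hVW) _

lemma finrank_lt_of_le_ker_linearizedMap (p e : ℕ) [Fact p.Prime] (he : e ≠ 0) (K : Type*)
    [Field K] [Finite K] [CharP K p] (hF : p ^ e ≤ Nat.card (Fqsub p e K)) {M : ℕ}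
    {c : Fin M → K} (hc : c ≠ 0) (U : Submodule (Fqsub p e K) K)
    (hU : U ≤ LinearMap.ker (linearizedMap p e K c)) :
    finrank (Fqsub p e K) U < M := by
  have hq : 1 < p ^ e := Nat.one_lt_pow he (Fact.out : p.Prime).one_lt
  obtain ⟨l, -⟩ := Function.ne_iff.mp hc
  have hroots := card_pow_finrank_le_natDegree U (linearizedPoly_ne_zero hq hc) fun x hx => by
    rw [IsRoot.def, ← linearizedMap_apply]
    exact hU hx
  by_contra! hM
  have : (p ^ e) ^ M ≤ (p ^ e) ^ (M - 1) := calc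
    (p ^ e) ^ M ≤ (p ^ e) ^ finrank (Fqsub p e K) U := Nat.pow_le_pow_right (by omega) hM
    _ ≤ Nat.card (Fqsub p e K) ^ finrank (Fqsub p e K) U := Nat.pow_le_pow_left hF _
    _ ≤ (p ^ e) ^ (M - 1) := hroots.trans (natDegree_linearizedPoly_le (by omega) c)
  exact this.not_gt (Nat.pow_lt_pow_right hq (Nat.sub_lt l.pos one_pos))

theorem construction_I_static_error_resilience_general
    (p e m : ℕ) [Fact p.Prime] (hq : 1 ≤ e)
    (K : Type*) [Field K] [Fintype K] [CharP K p]
    (k α t M : ℕ)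
    (hD : 2 * t * α + M ≤ k * α)
    (N : ℕ) (hN : N = k * α)
    (hcard : Fintype.card K = (p ^ e) ^ m)
    (g : Fin N → K) (hg : LinearIndependent (Fqsub p e K) g)
    (a₁ a₂ : Fin M → K)
    (G : Matrix (Fin N) (Fin N) (Fqsub p e K)) (hG : IsUnit G)
    (w₁ w₂ : Fin (t * α) → K)
    (B₁ B₂ : Matrix (Fin (t * α)) (Fin N) (Fqsub p e K))
    (heq : ∀ j : Fin N,
        (∑ i, (∑ l, a₁ l * g i ^ (p ^ e) ^ (l : ℕ)) * (G i j : K))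
            + ∑ i, w₁ i * (B₁ i j : K) =
        (∑ i, (∑ l, a₂ l * g i ^ (p ^ e) ^ (l : ℕ)) * (G i j : K))
            + ∑ i, w₂ i * (B₂ i j : K)) :
    a₁ = a₂ := by
  by_contra hne
  let φ := linearizedMap p e K (a₁ - a₂)
  let V := span (Fqsub p e K) (Set.range g)
  let W := span (Fqsub p e K) (Set.range (Sum.elim w₁ w₂))
  have hw₁ (i : Fin (t * α)) : w₁ i ∈ W := subset_span ⟨Sum.inl i, rfl⟩
  have hw₂ (i : Fin (t * α)) : w₂ i ∈ W := subset_span ⟨Sum.inr i, rfl⟩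
  have hφg : (fun i => φ (g i)) ᵥ* G.map (algebraMap _ K)
      = w₂ ᵥ* B₂.map (algebraMap _ K) - w₁ ᵥ* B₁.map (algebraMap _ K) := by
    ext j
    simp only [φ, linearizedMap, LinearMap.coe_mk, AddHom.coe_mk, Pi.sub_apply, sub_mul,
      Finset.sum_sub_distrib, vecMul, dotProduct, map_apply]
    exact sub_eq_sub_iff_add_eq_add.mpr ((heq j).trans (add_comm _ _))
  have hVW : V.map φ ≤ W := (map_span_le _ _ _).mpr <| Set.forall_mem_range.mpr fun i =>
    mem_of_vecMul_map_algebraMap_mem (v := fun i => φ (g i)) hG (fun j => by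
      rw [hφg]
      exact sub_mem (vecMul_map_algebraMap_mem hw₂ _ j) (vecMul_map_algebraMap_mem hw₁ _ j)) i
  have hW : finrank (Fqsub p e K) W ≤ 2 * t * α := calc
    _ ≤ Fintype.card (Fin (t * α) ⊕ Fin (t * α)) := finrank_range_le_card _
    _ = 2 * t * α := by simp only [Fintype.card_sum, Fintype.card_fin]; ring
  have hV : finrank (Fqsub p e K) V = k * α := by
    rw [finrank_span_eq_card hg, Fintype.card_fin, hN]
  have hker := finrank_le_finrank_inf_ker_add_of_map_le φ V hVW
  have := finrank_lt_of_le_ker_linearizedMap p e (by omega) K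
    (le_natCard_Fqsub p e m (by omega) K hcard) (sub_ne_zero.mpr hne) (V ⊓ LinearMap.ker φ)
    inf_le_right
  omega

/-- Theorem 1: static error resilience of Construction I. Let
`k, α, t, M` be positive integers with `2tα ≤ kα - M`, `N = kα ≤ m`, and let
`g_1, …, g_N ∈ K` be linearly independent over `F_q`. If two files encoded by the outer
`[N, M, D = N - M + 1]` Gabidulin code, observed through an invertible `N × N` matrix `G`
over `F_q` (the contents of any `k` nodes) and corrupted by error contributions
`e_j B_j` with `e_j ∈ K^{tα}` and `B_j` a `tα × N` matrix over `F_q`, agree, then the two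
files coincide: when `2tα + 1 ≤ D`, the original file can be recovered from any `k` nodes
despite `t` statically corrupted nodes. -/
theorem construction_I_static_error_resilience
    (p e m : ℕ) [Fact p.Prime] (hq : 1 ≤ e)
    (K : Type*) [Field K] [Fintype K] [CharP K p]
    (k α t M : ℕ) (hk : 1 ≤ k) (hα : 1 ≤ α) (ht : 1 ≤ t) (hM : 1 ≤ M)
    (hD : 2 * t * α + M ≤ k * α)
    (N : ℕ) (hN : N = k * α) (hNm : N ≤ m)
    (hcard : Fintype.card K = (p ^ e) ^ m)
    (g : Fin N → K) (hg : LinearIndependent (Fqsub p e K) g)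
    (a₁ a₂ : Fin M → K)
    (G : Matrix (Fin N) (Fin N) (Fqsub p e K)) (hG : IsUnit G)
    (w₁ w₂ : Fin (t * α) → K)
    (B₁ B₂ : Matrix (Fin (t * α)) (Fin N) (Fqsub p e K))
    (heq : ∀ j : Fin N,
        (∑ i, (∑ l, a₁ l * g i ^ (p ^ e) ^ (l : ℕ)) * (G i j : K))
            + ∑ i, w₁ i * (B₁ i j : K) =
        (∑ i, (∑ l, a₂ l * g i ^ (p ^ e) ^ (l : ℕ)) * (G i j : K))
            + ∑ i, w₂ i * (B₂ i j : K)) :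
    a₁ = a₂ :=
  construction_I_static_error_resilience_general p e m hq K k α t M hD N hN hcard g hg a₁ a₂ G hG w₁
    w₂ B₁ B₂ heq
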